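/- Let x', y' ∈ {0,1}^m. Suppose Alice appends A ones (and possibly zeros) and Bob appends B ones (and possibly zeros) to extend x', y' to strings x, y ∈ {0,1}^{m+s} agreeing with x', y' on the first m coordinates. Then for any target increase C in Hamming distance (i.e., Δ(x,y) = Δ(x',y') + C): such an extension exists if and only if |A - B| ≤ C ≤ A + B, C ≡ A + B (mod 2), and s ≥ (A + B + C)/2. -/

import Mathlib

/-!
Padding splits off: `Δ(x' ++ u, y' ++ v) = Δ(x', y') + Δ(u, v)`, so the question is which triples
`(wt u, wt v, Δ(u, v))` occur for `u, v ∈ {0,1}^s`. Writing `c` for the number of coordinates where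
both strings are `1`, one has `A + B = Δ(u, v) + 2c` and `Δ(u, v) + c ≤ s`, while
`|A - B| ≤ Δ(u, v)` is the triangle inequality through the zero string. Conversely, given the
conditions, `u = 1` on `[0, a + c)` and `v = 1` on `[a, a + b + c)` realise the triple, where
`a + c = A`, `b + c = B`, `a + b = C`.
-/

def wt {α : Type*} [Fintype α] (x : α → Bool) : ℕ :=
  (Finset.univ.filter fun i => x i = true).card

open Finset

lemma hammingDist_sumElim {ι κ β : Type*} [Fintype ι] [Fintype κ] [DecidableEq β]
    (x y : ι → β) (u v : κ → β) :
    hammingDist (Sum.elim x u) (Sum.elim y v) = hammingDist x y + hammingDist u v := by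
  simp only [hammingDist, card_filter, Fintype.sum_sum_type, Sum.elim_inl, Sum.elim_inr]
  congr! 2

section Weight

variable {ι : Type*} [Fintype ι]

lemma wt_eq_sum_toNat (u : ι → Bool) : wt u = ∑ i, (u i).toNat := by
  simp only [wt, card_filter]
  exact sum_congr rfl fun i _ => by cases u i <;> rfl

lemma wt_eq_hammingDist_false (u : ι → Bool) : wt u = hammingDist u (fun _ => false) := by
  simp [wt, hammingDist]

lemma wt_add_wt (u v : ι → Bool) :
    wt u + wt v = hammingDist u v + 2 * wt (fun i => u i && v i) := by
  simp only [wt_eq_sum_toNat, hammingDist, card_filter, mul_sum, ← sum_add_distrib]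
  exact sum_congr rfl fun i _ => by cases u i <;> cases v i <;> rfl

lemma hammingDist_add_wt_and_le_card (u v : ι → Bool) :
    hammingDist u v + wt (fun i => u i && v i) ≤ Fintype.card ι := by
  simp only [wt_eq_sum_toNat, hammingDist, card_filter, ← sum_add_distrib,
    Fintype.card_eq_sum_ones]
  exact sum_le_sum fun i _ => by cases u i <;> cases v i <;> decide

lemma abs_wt_sub_wt_le_hammingDist (u v : ι → Bool) :
    |(wt u : ℤ) - wt v| ≤ hammingDist u v := by
  have h₁ := hammingDist_triangle u v (fun _ => false)
  have h₂ := hammingDist_triangle v u (fun _ => false)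
  rw [hammingDist_comm v u] at h₂
  rw [← wt_eq_hammingDist_false, ← wt_eq_hammingDist_false] at h₁ h₂
  rw [abs_le]
  constructor <;> omega

end Weight

lemma wt_indicator_Ico {s l r : ℕ} (hr : r ≤ s) :
    wt (fun i : Fin s => decide (l ≤ (i : ℕ) ∧ (i : ℕ) < r)) = r - l := by
  have hIco : {x ∈ Iio s | (l ≤ x ∧ x < r) ∧ x < s} = Ico l r := by
    ext
    simp only [mem_filter, mem_Iio, mem_Ico]
    omega
  simp [wt, ← card_map Fin.valEmbedding, map_filter', Fin.exists_iff, hIco]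

theorem exists_wt_wt_hammingDist_iff (s A B C : ℕ) :
    (∃ u v : Fin s → Bool, wt u = A ∧ wt v = B ∧ hammingDist u v = C) ↔
      (|(A : ℤ) - B| ≤ C ∧ C ≤ A + B ∧ C % 2 = (A + B) % 2 ∧ (A + B + C) / 2 ≤ s) := by
  constructor
  · rintro ⟨u, v, rfl, rfl, rfl⟩
    have hsum := wt_add_wt u v
    have hcard := hammingDist_add_wt_and_le_card u v
    rw [Fintype.card_fin] at hcard
    exact ⟨abs_wt_sub_wt_le_hammingDist u v, by omega, by omega, by omega⟩
  · rintro ⟨habs, hle, hpar, hs⟩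
    obtain ⟨hAB, hBA⟩ := abs_le.mp habs
    obtain ⟨a, b, c, rfl, rfl, rfl⟩ : ∃ a b c, a + c = A ∧ b + c = B ∧ a + b = C :=
      ⟨(A + C - B) / 2, (B + C - A) / 2, (A + B - C) / 2, by omega, by omega, by omega⟩
    have hs' : a + b + c ≤ s := by omega
    let u : Fin s → Bool := fun i => decide (0 ≤ (i : ℕ) ∧ (i : ℕ) < a + c)
    let v : Fin s → Bool := fun i => decide (a ≤ (i : ℕ) ∧ (i : ℕ) < a + b + c)
    have hu : wt u = a + c := wt_indicator_Ico (by omega)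
    have hv : wt v = b + c := by rw [wt_indicator_Ico hs']; omega
    have huv : wt (fun i => u i && v i) = c := by
      have : (fun i => u i && v i) = fun i : Fin s => decide (a ≤ (i : ℕ) ∧ (i : ℕ) < a + c) := by
        funext i
        simp only [u, v, ← Bool.decide_and, decide_eq_decide]
        omega
      rw [this, wt_indicator_Ico (by omega)]
      omega
    refine ⟨u, v, hu, hv, ?_⟩
    have := wt_add_wt u v
    omega

/-- Padding: one can extend x', y' ∈ {0,1}^m by s coordinates, with the
    extension of x having weight A and that of y having weight B, so that the
    Hamming distance increases by exactly C, iff |A-B| ≤ C ≤ A+B,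
    C ≡ A+B (mod 2), and s ≥ (A+B+C)/2. -/
theorem stmt_15 (m s A B C : ℕ) (x' y' : Fin m → Bool) :
    (∃ u v : Fin s → Bool, wt u = A ∧ wt v = B ∧
        hammingDist (Sum.elim x' u) (Sum.elim y' v) = hammingDist x' y' + C) ↔
      (|(A : ℤ) - B| ≤ C ∧ C ≤ A + B ∧ C % 2 = (A + B) % 2 ∧ (A + B + C) / 2 ≤ s) := by
  simp only [hammingDist_sumElim, Nat.add_left_cancel_iff]
  exact exists_wt_wt_hammingDist_iff s A B C
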